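/- Over an algebraically closed field F, the subset of tuples (g₁,…,g_r) ∈ F[x]_{≤p₁} × … × F[x]_{≤p_r} (r > 1) such that some g_i has exact degree p_i and the ideal (g₁,…,g_r) contains 1 is Zariski open and non-empty. -/

import Mathlib

/-- The Zariski topology on the affine space `σ → F` over a field `F`. -/
def affineZariskiTopology (σ F : Type*) [Field F] : TopologicalSpace (σ → F) :=
  TopologicalSpace.generateFrom
    {U | ∃ S : Set (MvPolynomial σ F),
      Uᶜ = {c | ∀ p ∈ S, MvPolynomial.eval c p = 0}}

/-- The polynomial of degree `≤ p` with coefficient tuple `c : Fin (p+1) → F`. -/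
noncomputable def polyOfCoeffs {F : Type*} [Field F] {p : ℕ} (c : Fin (p + 1) → F) :
    Polynomial F :=
  ∑ i : Fin (p + 1), Polynomial.C (c i) * Polynomial.X ^ (i : ℕ)

/-!
For `g i` of degree `≤ p i` and `N = ∑ p i`, "some `g i` has degree exactly `p i` and
`1 ∈ (g₁, …, g_r)`" is equivalent to surjectivity of the linear map `(h i) ↦ ∑ h i * g i` from
`∏ F[X]_{≤ N - p i}` onto `F[X]_{≤ N}`. Given a Bézout identity times `f`, reduce every cofactor
except that of an exact-degree `g i₀` modulo `g i₀`; the degree of the remaining cofactor is then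
forced. Conversely, reaching `X ^ N` needs some top coefficient of some `g i`, and reaching `1`
is the ideal condition. The matrix of this map (a generalised Sylvester matrix) has the
coefficients of the `g i` as entries, so surjectivity is the non-vanishing of some maximal minor:
a Zariski-open condition. The tuple `(X ^ p₀, 1, …, 1)` lies in the set.
-/

open Polynomial

theorem Matrix.mulVec_surjective_iff_exists_det_submatrix_ne_zero {K m n : Type*} [Field K]
    [Fintype m] [Fintype n] [DecidableEq m] (A : Matrix m n K) :
    Function.Surjective A.mulVec ↔ ∃ c : m → n, (A.submatrix id c).det ≠ 0 := by
  have hdet (c : m → n) : (A.submatrix id c).det ≠ 0 ↔ LinearIndependent K (A.col ∘ c) := by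
    rw [← isUnit_iff_ne_zero, ← isUnit_iff_isUnit_det, ← linearIndependent_cols_iff_isUnit]
    rfl
  simp_rw [hdet, ← coe_mulVecLin, ← LinearMap.range_eq_top, range_mulVecLin]
  constructor
  · intro hA
    obtain ⟨κ, a, ha, hspan, hli⟩ := exists_linearIndependent' K A.col
    have : Fintype κ := Fintype.ofInjective a ha
    have hcard : Fintype.card m = Fintype.card κ := by
      rw [← finrank_span_eq_card hli, hspan, hA, finrank_top, Module.finrank_fintype_fun_eq_card]
    obtain e := Fintype.equivOfCardEq hcard
    exact ⟨a ∘ e, hli.comp e e.injective⟩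
  · rintro ⟨c, hc⟩
    refine eq_top_mono (Submodule.span_mono (Set.range_comp_subset_range c A.col)) ?_
    exact hc.span_eq_top_of_card_eq_finrank' (Module.finrank_fintype_fun_eq_card K).symm

theorem isOpen_setOf_mulVec_map_eval_surjective {σ F m n : Type*} [Field F]
    [Fintype m] [Fintype n] [DecidableEq m] (M : Matrix m n (MvPolynomial σ F)) :
    @IsOpen _ (affineZariskiTopology σ F)
      {c | Function.Surjective (M.map (MvPolynomial.eval c)).mulVec} := by
  apply TopologicalSpace.isOpen_generateFrom_of_mem
  refine ⟨Set.range fun c : m → n => (M.submatrix id c).det, ?_⟩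
  ext x
  simp [Matrix.mulVec_surjective_iff_exists_det_submatrix_ne_zero, RingHom.map_det,
    ← Matrix.submatrix_map]

section PolyOfCoeffs

variable {F : Type*} [Field F] {n : ℕ}

theorem coeff_polyOfCoeffs (c : Fin (n + 1) → F) (k : Fin (n + 1)) :
    (polyOfCoeffs c).coeff k = c k := by
  simp [polyOfCoeffs, coeff_X_pow, Fin.val_inj]

theorem natDegree_polyOfCoeffs_le (c : Fin (n + 1) → F) : (polyOfCoeffs c).natDegree ≤ n :=
  natDegree_sum_le_of_forall_le _ _ fun i _ =>
    (natDegree_C_mul_X_pow_le _ _).trans (Nat.lt_succ_iff.mp i.isLt)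

theorem polyOfCoeffs_coeff {q : F[X]} (hq : q.natDegree ≤ n) :
    polyOfCoeffs (fun k : Fin (n + 1) => q.coeff k) = q :=
  (ext_iff_natDegree_le (natDegree_polyOfCoeffs_le _) hq).mpr fun k hk =>
    coeff_polyOfCoeffs (fun k : Fin (n + 1) => q.coeff k) ⟨k, Nat.lt_succ_of_le hk⟩

end PolyOfCoeffs

theorem natDegree_sum_mul_le {R ι : Type*} [CommRing R] {s : Finset ι} {g h : ι → R[X]}
    {N : ℕ} {d : ι → ℕ} (hg : ∀ i, (g i).natDegree + d i ≤ N)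
    (hh : ∀ i ∈ s, (h i).natDegree ≤ d i) :
    (∑ i ∈ s, h i * g i).natDegree ≤ N :=
  natDegree_sum_le_of_forall_le _ _ fun i hi =>
    natDegree_mul_le.trans (by have := hg i; have := hh i hi; omega)

section Sylvester

variable {ι : Type*}

noncomputable def sylvesterMatrix {R : Type*} [CommRing R] (g : ι → R[X]) (N : ℕ)
    (d : ι → ℕ) : Matrix (Fin (N + 1)) (Σ i, Fin (d i + 1)) R :=
  fun k v => (g v.1 * X ^ (v.2 : ℕ)).coeff k

theorem sylvesterMatrix_map {R S : Type*} [CommRing R] [CommRing S] (f : R →+* S)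
    (g : ι → R[X]) (N : ℕ) (d : ι → ℕ) :
    (sylvesterMatrix g N d).map f = sylvesterMatrix (fun i => (g i).map f) N d := by
  ext k v
  simp only [sylvesterMatrix, Matrix.map_apply, ← coeff_map, Polynomial.map_mul,
    Polynomial.map_pow, map_X]

variable [Fintype ι] {F : Type*} [Field F]

theorem sylvesterMatrix_mulVec (g : ι → F[X]) (N : ℕ) (d : ι → ℕ)
    (x : (Σ i, Fin (d i + 1)) → F) (k : Fin (N + 1)) :
    (sylvesterMatrix g N d).mulVec x k =
      (∑ i, polyOfCoeffs (fun j => x ⟨i, j⟩) * g i).coeff k := by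
  simp only [Matrix.mulVec, dotProduct, Fintype.sum_sigma, polyOfCoeffs, Finset.sum_mul,
    finsetSum_coeff, sylvesterMatrix, mul_right_comm _ _ (g _), mul_comm (C _), coeff_mul_C,
    mul_comm (g _)]

def CombinationsCoverDegreeLE (g : ι → F[X]) (N : ℕ) (d : ι → ℕ) : Prop :=
  ∀ f : F[X], f.natDegree ≤ N →
    ∃ h : ι → F[X], (∀ i, (h i).natDegree ≤ d i) ∧ ∑ i, h i * g i = f

theorem sylvesterMatrix_mulVec_surjective_iff {g : ι → F[X]} {N : ℕ} {d : ι → ℕ}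
    (hg : ∀ i, (g i).natDegree + d i ≤ N) :
    Function.Surjective (sylvesterMatrix g N d).mulVec ↔ CombinationsCoverDegreeLE g N d := by
  constructor
  · intro hsurj f hf
    obtain ⟨x, hx⟩ := hsurj fun k => f.coeff k
    refine ⟨fun i => polyOfCoeffs fun j => x ⟨i, j⟩, fun i => natDegree_polyOfCoeffs_le _, ?_⟩
    refine (ext_iff_natDegree_le (natDegree_sum_mul_le hg fun i _ => natDegree_polyOfCoeffs_le _)
      hf).mpr fun k hk => ?_
    rw [← sylvesterMatrix_mulVec g N d x ⟨k, Nat.lt_succ_of_le hk⟩, hx]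
  · intro hcover y
    obtain ⟨h, hh, hsum⟩ := hcover (polyOfCoeffs y) (natDegree_polyOfCoeffs_le y)
    refine ⟨fun v => (h v.1).coeff v.2, funext fun k => ?_⟩
    simp only [sylvesterMatrix_mulVec, polyOfCoeffs_coeff (hh _), hsum, coeff_polyOfCoeffs]

end Sylvester

section Coprime

variable {ι : Type*} [Fintype ι] {F : Type*} [Field F]

theorem exists_sum_mul_eq_and_degree_lt {g a : ι → F[X]} {f : F[X]} (i₀ : ι)
    (hg : g i₀ ≠ 0) (ha : ∑ i, a i * g i = f) :
    ∃ b : ι → F[X], ∑ i, b i * g i = f ∧ ∀ i ≠ i₀, (b i).degree < (g i₀).degree := by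
  classical
  refine ⟨fun i => a i % g i₀ + if i = i₀ then ∑ j, a j / g i₀ * g j else 0, ?_,
    fun i hi => ?_⟩
  · calc ∑ i, (a i % g i₀ + if i = i₀ then ∑ j, a j / g i₀ * g j else 0) * g i
        = ∑ i, a i % g i₀ * g i + (∑ i, a i / g i₀ * g i) * g i₀ := by
          simp only [add_mul, Finset.sum_add_distrib, ite_mul, zero_mul,
            Finset.sum_ite_eq', Finset.mem_univ, if_true]
      _ = ∑ i, a i * g i := by
          rw [Finset.sum_mul, ← Finset.sum_add_distrib]
          refine Finset.sum_congr rfl fun i _ => ?_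
          conv_rhs => rw [← EuclideanDomain.mod_add_div (a i) (g i₀)]
          ring
      _ = f := ha
  · simpa [hi] using degree_mod_lt (a i) hg

theorem natDegree_le_sub_of_sum_mul_eq {g h : ι → F[X]} {f : F[X]} {N : ℕ} {d : ι → ℕ}
    (i₀ : ι) (hg₀ : g i₀ ≠ 0) (hg : ∀ i, (g i).natDegree + d i ≤ N)
    (hh : ∀ i ≠ i₀, (h i).natDegree ≤ d i) (hf : f.natDegree ≤ N) (hsum : ∑ i, h i * g i = f) :
    (h i₀).natDegree ≤ N - (g i₀).natDegree := by
  classical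
  have hrest : h i₀ * g i₀ = f - ∑ i ∈ Finset.univ.erase i₀, h i * g i := by
    rw [← hsum, ← Finset.add_sum_erase _ _ (Finset.mem_univ i₀), add_sub_cancel_right]
  have hle : (h i₀ * g i₀).natDegree ≤ N := hrest ▸ (natDegree_sub_le _ _).trans
    (max_le hf (natDegree_sum_mul_le hg fun i hi => hh i (Finset.ne_of_mem_erase hi)))
  rcases eq_or_ne (h i₀) 0 with h0 | h0
  · simp [h0]
  · rw [natDegree_mul h0 hg₀] at hle
    omega

theorem exists_degree_eq_of_sum_mul_eq_X_pow {g h : ι → F[X]} {N : ℕ} {p : ι → ℕ}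
    (hp : ∀ i, p i ≤ N) (hg : ∀ i, (g i).natDegree ≤ p i) (hh : ∀ i, (h i).natDegree ≤ N - p i)
    (hsum : ∑ i, h i * g i = X ^ N) : ∃ i, (g i).degree = p i := by
  by_contra! hne
  have hcoeff (i : ι) : (h i * g i).coeff N = 0 := by
    rw [← Nat.sub_add_cancel (hp i), coeff_mul_add_eq_of_natDegree_le (hh i) (hg i),
      not_imp_comm.mp (degree_eq_of_le_of_coeff_ne_zero (degree_le_of_natDegree_le (hg i)))
        (hne i), mul_zero]
  simpa [hcoeff] using congrArg (coeff · N) hsum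

theorem exists_degree_eq_and_one_mem_span_iff {g : ι → F[X]} {p : ι → ℕ}
    (hg : ∀ i, (g i).natDegree ≤ p i) :
    ((∃ i, (g i).degree = p i) ∧ (1 : F[X]) ∈ Ideal.span (Set.range g)) ↔
      CombinationsCoverDegreeLE g (∑ j, p j) fun i => ∑ j, p j - p i := by
  classical
  set N := ∑ j, p j
  have hp (i : ι) : p i ≤ N := Finset.single_le_sum (fun _ _ => Nat.zero_le _) (Finset.mem_univ i)
  constructor
  · rintro ⟨⟨i₀, hdeg⟩, hone⟩ f hf
    obtain ⟨a, ha⟩ := Ideal.mem_span_range_iff_exists_fun.mp hone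
    have hg₀ : g i₀ ≠ 0 := fun h0 => by simp [h0] at hdeg
    have hnat₀ := natDegree_eq_of_degree_eq_some hdeg
    obtain ⟨b, hb, hlt⟩ := exists_sum_mul_eq_and_degree_lt (a := fun i => f * a i) (f := f) i₀
      hg₀ (by simp_rw [mul_assoc, ← Finset.mul_sum, ha, mul_one])
    have hrest (i : ι) (hi : i ≠ i₀) : (b i).natDegree ≤ N - p i := by
      rcases eq_or_ne (b i) 0 with h0 | h0
      · simp [h0]
      have hb_lt := natDegree_lt_natDegree h0 (hlt i hi)
      have hpair : p i + p i₀ ≤ N := by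
        rw [← Finset.sum_pair hi]
        exact Finset.sum_le_sum_of_subset (Finset.subset_univ _)
      omega
    refine ⟨b, fun i => ?_, hb⟩
    rcases eq_or_ne i i₀ with rfl | hi
    · simpa [hnat₀] using natDegree_le_sub_of_sum_mul_eq i hg₀
        (fun j => by have := hg j; have := hp j; omega) hrest hf hb
    · exact hrest i hi
  · intro hcover
    obtain ⟨h, hh, hsum⟩ := hcover (X ^ N) (natDegree_X_pow_le N)
    obtain ⟨h', -, hsum'⟩ := hcover 1 (natDegree_one.trans_le (Nat.zero_le N))
    exact ⟨exists_degree_eq_of_sum_mul_eq_X_pow hp hg hh hsum,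
      Ideal.mem_span_range_iff_exists_fun.mpr ⟨h', hsum'⟩⟩

theorem sylvesterMatrix_mulVec_surjective_iff_exists_degree_eq_and_one_mem_span
    {g : ι → F[X]} {p : ι → ℕ} (hg : ∀ i, (g i).natDegree ≤ p i) :
    Function.Surjective (sylvesterMatrix g (∑ j, p j) fun i => ∑ j, p j - p i).mulVec ↔
      (∃ i, (g i).degree = p i) ∧ (1 : F[X]) ∈ Ideal.span (Set.range g) := by
  rw [sylvesterMatrix_mulVec_surjective_iff fun i => ?_, exists_degree_eq_and_one_mem_span_iff hg]
  have := hg i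
  have := Finset.single_le_sum (fun j _ => Nat.zero_le (p j)) (Finset.mem_univ i)
  omega

end Coprime

theorem exists_degree_eq_and_one_mem_span {ι F : Type*} [Field F] {i₀ i₁ : ι} (h : i₀ ≠ i₁)
    (p : ι → ℕ) :
    ∃ g : ι → F[X], (∀ i, (g i).natDegree ≤ p i) ∧
      (∃ i, (g i).degree = p i) ∧ (1 : F[X]) ∈ Ideal.span (Set.range g) := by
  classical
  refine ⟨fun i => if i = i₀ then X ^ p i else 1, fun i => ?_, ⟨i₀, by simp⟩,
    Ideal.subset_span ⟨i₁, by simp [h.symm]⟩⟩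
  dsimp only
  split_ifs <;> simp

noncomputable def genericPoly (F : Type*) [Field F] {ι : Type*} (p : ι → ℕ) (i : ι) :
    (MvPolynomial (Σ i, Fin (p i + 1)) F)[X] :=
  ∑ a : Fin (p i + 1), C (MvPolynomial.X ⟨i, a⟩) * X ^ (a : ℕ)

theorem map_genericPoly {F ι : Type*} [Field F] (p : ι → ℕ) (c : (Σ i, Fin (p i + 1)) → F)
    (i : ι) : (genericPoly F p i).map (MvPolynomial.eval c) = polyOfCoeffs fun a => c ⟨i, a⟩ := by
  simp [genericPoly, polyOfCoeffs, Polynomial.map_sum]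

theorem coprime_tuples_open_nonempty_general (F : Type*) [Field F]
    (r : ℕ) (hr : 1 < r) (p : Fin r → ℕ) :
    @IsOpen ((Σ i : Fin r, Fin (p i + 1)) → F)
      (affineZariskiTopology _ F)
      {c | (∃ i : Fin r,
            (polyOfCoeffs (fun a => c ⟨i, a⟩)).degree = (p i : WithBot ℕ)) ∧
        (1 : Polynomial F) ∈
          Ideal.span (Set.range fun i : Fin r => polyOfCoeffs (fun a => c ⟨i, a⟩))} ∧
    {c : (Σ i : Fin r, Fin (p i + 1)) → F |
        (∃ i : Fin r,
            (polyOfCoeffs (fun a => c ⟨i, a⟩)).degree = (p i : WithBot ℕ)) ∧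
        (1 : Polynomial F) ∈
          Ideal.span (Set.range fun i : Fin r => polyOfCoeffs (fun a => c ⟨i, a⟩))}.Nonempty := by
  constructor
  · convert isOpen_setOf_mulVec_map_eval_surjective
      (sylvesterMatrix (genericPoly F p) (∑ j, p j) fun i => ∑ j, p j - p i) using 1
    ext c
    rw [Set.mem_ofPred_eq, Set.mem_ofPred_eq, sylvesterMatrix_map,
      sylvesterMatrix_mulVec_surjective_iff_exists_degree_eq_and_one_mem_span
        fun i => (map_genericPoly p c i).symm ▸ natDegree_polyOfCoeffs_le _]
    simp only [map_genericPoly]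
  · obtain ⟨g, hg, hg_mem⟩ := exists_degree_eq_and_one_mem_span (F := F)
      (Fin.ne_of_val_ne zero_ne_one : (⟨0, by omega⟩ : Fin r) ≠ ⟨1, hr⟩) p
    exact ⟨fun v => (g v.1).coeff v.2,
      by simpa only [Set.mem_ofPred_eq, polyOfCoeffs_coeff (hg _)] using hg_mem⟩

/-- Over an algebraically closed field `F`, the subset of tuples
`(g₁, …, g_r) ∈ F[x]_{≤p₁} × ⋯ × F[x]_{≤p_r}` (with `r > 1`), identified with
an affine space of coefficient tuples, such that some `g_i` has exact degree
`p_i` and `1 ∈ (g₁, …, g_r)`, is Zariski open and non-empty. -/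
theorem coprime_tuples_open_nonempty (F : Type*) [Field F] [IsAlgClosed F]
    (r : ℕ) (hr : 1 < r) (p : Fin r → ℕ) :
    @IsOpen ((Σ i : Fin r, Fin (p i + 1)) → F)
      (affineZariskiTopology _ F)
      {c | (∃ i : Fin r,
            (polyOfCoeffs (fun a => c ⟨i, a⟩)).degree = (p i : WithBot ℕ)) ∧
        (1 : Polynomial F) ∈
          Ideal.span (Set.range fun i : Fin r => polyOfCoeffs (fun a => c ⟨i, a⟩))} ∧
    {c : (Σ i : Fin r, Fin (p i + 1)) → F |
        (∃ i : Fin r,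
            (polyOfCoeffs (fun a => c ⟨i, a⟩)).degree = (p i : WithBot ℕ)) ∧
        (1 : Polynomial F) ∈
          Ideal.span (Set.range fun i : Fin r => polyOfCoeffs (fun a => c ⟨i, a⟩))}.Nonempty :=
  coprime_tuples_open_nonempty_general F r hr p
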